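/- arXiv:1806.09098 — 2 statements merged into one kernel-verified Lean document; each statement's English description precedes it below -/
import Mathlib

section
/- Let {K_α, Λ_α}_{α∈Λ} be an f.r.f.t. nested structure of K. Then for every α ∈ Λ, one has V_α ∪ C_α ⊆ ⋃_{β∈Λ_α} V_β. -/
open Set

noncomputable section

/-- Points of `ℝ^d`. -/
abbrev Pt (d : ℕ) := EuclideanSpace ℝ (Fin d)

/-- `f` is a similitude: it scales all distances by some ratio `r > 0`. -/
def IsSimilitude {d : ℕ} (f : Pt d → Pt d) : Prop :=
  ∃ r : ℝ, 0 < r ∧ ∀ x y, dist (f x) (f y) = r * dist x y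

/-- The levels `Λ^{(k)}_ϑ` of a nested structure: `Λ^{(0)}_ϑ = {ϑ}` and
`Λ^{(k+1)}_ϑ = ⋃_{β ∈ Λ^{(k)}_ϑ} Λ_β`. -/
def levels {Λ : Type} (child : Λ → Set Λ) (root : Λ) : ℕ → Set Λ
  | 0 => {root}
  | k + 1 => ⋃ β ∈ levels child root k, child β

/-- The set of parents of `α`. -/
def parentSet {Λ : Type} (child : Λ → Set Λ) (α : Λ) : Set Λ := {γ | α ∈ child γ}

/-- `P^n(α)`: the set of `n`-fold parents of `α` (`P^0(α) = {α}`). -/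
def parentIter {Λ : Type} (child : Λ → Set Λ) : ℕ → Λ → Set Λ
  | 0, α => {α}
  | n + 1, α => ⋃ β ∈ parentIter child n α, parentSet child β

/-- `C_α = ⋃_{β ≠ β' ∈ Λ_α} K_β ∩ K_{β'}`. -/
def Cset {d : ℕ} {Λ : Type} (Kα : Λ → Set (Pt d)) (child : Λ → Set Λ) (α : Λ) :
    Set (Pt d) :=
  ⋃ β ∈ child α, ⋃ β' ∈ child α, ⋃ (_ : β ≠ β'), (Kα β ∩ Kα β')

/-- `α ∼ β`: there is a similitude mapping `K_α` onto `K_β`. -/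
def simRel {d : ℕ} {Λ : Type} (Kα : Λ → Set (Pt d)) (α β : Λ) : Prop :=
  ∃ f : Pt d → Pt d, IsSimilitude f ∧ f '' Kα α = Kα β

/-- The boundary `V_α = ⋃_{β∼α, β≠ϑ} φ_{β,α}(K_β ∩ ⋃_{n≥1} ⋃_{γ∈P^n(β)} C_γ)`. -/
def Vset {d : ℕ} {Λ : Type} (Kα : Λ → Set (Pt d)) (child : Λ → Set Λ)
    (φ : Λ → Λ → Pt d → Pt d) (root α : Λ) : Set (Pt d) :=
  ⋃ β, ⋃ (_ : simRel Kα β α ∧ β ≠ root),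
    φ β α '' (Kα β ∩ ⋃ n, ⋃ (_ : 1 ≤ n), ⋃ γ ∈ parentIter child n β, Cset Kα child γ)

/-- A nested structure `{K_α, Λ_α}_{α ∈ Λ}` of the (connected self-similar) set `K`:
a countable family of distinct compact connected subsets of `K`, none a singleton,
with a root `ϑ` such that `K_ϑ = K`, each `K_α` the union of its (at least two)
children, and every non-root index an offspring of the root. -/
structure NestedStructure (d : ℕ) (K : Set (Pt d)) (Λ : Type) : Type where
  Kα : Λ → Set (Pt d)
  child : Λ → Set Λ
  root : Λ
  countable : Countable Λ
  inj : Function.Injective Kα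
  compact : ∀ α, IsCompact (Kα α)
  connected : ∀ α, IsConnected (Kα α)
  not_singleton : ∀ α, ¬ ∃ x, Kα α = {x}
  subset_K : ∀ α, Kα α ⊆ K
  root_eq : Kα root = K
  child_finite : ∀ α, (child α).Finite
  child_nontrivial : ∀ α, (child α).Nontrivial
  child_union : ∀ α, Kα α = ⋃ β ∈ child α, Kα β
  offspring : ∀ α, α ≠ root → ∃ k, α ∈ levels child root k

/-- A finitely ramified of finite type (f.r.f.t.) nested structure: a nested structure
together with a coherent family of similitudes `φ_{α,β}` for equivalent indices,
satisfying (A1) finitely many `∼`-equivalence classes, (A2) compatible one-to-one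
correspondence between children of equivalent indices, and (A3) all boundaries `V_α`
finite. -/
structure FRFTStructure (d : ℕ) (K : Set (Pt d)) (Λ : Type)
    extends NestedStructure d K Λ where
  φ : Λ → Λ → Pt d → Pt d
  φ_isSim : ∀ α β, simRel Kα α β → IsSimilitude (φ α β)
  φ_maps : ∀ α β, simRel Kα α β → φ α β '' Kα α = Kα β
  φ_refl : ∀ α, φ α α = id
  φ_comp : ∀ α β γ, simRel Kα α γ → simRel Kα γ β → (φ γ β) ∘ (φ α γ) = φ α β
  A1 : (Set.range fun α => {β | simRel Kα α β}).Finite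
  A2 : ∀ α α', simRel Kα α α' → ∀ β ∈ child α,
      ∃! β', β' ∈ child α' ∧ simRel Kα β β' ∧ φ β β' = φ α α'
  A3 : ∀ α, (Vset Kα child φ root α).Finite

lemma simRel_refl {d : ℕ} {Λ : Type} (Kα : Λ → Set (Pt d)) (α : Λ) : simRel Kα α α :=
  ⟨id, ⟨1, one_pos, by simp⟩, image_id _⟩

lemma parentIter_succ_subset_of_mem_child {Λ : Type} {child : Λ → Set Λ} {β δ : Λ}
    (hδ : δ ∈ child β) (n : ℕ) : parentIter child n β ⊆ parentIter child (n + 1) δ := by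
  induction n with
  | zero =>
    rintro γ rfl
    exact mem_biUnion (mem_singleton δ) hδ
  | succ n ih =>
    intro γ hγ
    obtain ⟨β', hβ', hγ⟩ := mem_iUnion₂.mp hγ
    exact mem_biUnion (ih hβ') hγ

lemma mem_Vset {d : ℕ} {Λ : Type} {Kα : Λ → Set (Pt d)} {child : Λ → Set Λ}
    {φ : Λ → Λ → Pt d → Pt d} {root α β γ : Λ} {n : ℕ} {y : Pt d}
    (hsim : simRel Kα β α) (hβ : β ≠ root) (hy : y ∈ Kα β) (hn : 1 ≤ n)
    (hγ : γ ∈ parentIter child n β) (hyC : y ∈ Cset Kα child γ) :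
    φ β α y ∈ Vset Kα child φ root α :=
  mem_iUnion₂.mpr ⟨β, ⟨hsim, hβ⟩, mem_image_of_mem _ ⟨hy, mem_iUnion₂.mpr ⟨n, hn,
    mem_iUnion₂.mpr ⟨γ, hγ, hyC⟩⟩⟩⟩

namespace NestedStructure

variable {d : ℕ} {K : Set (Pt d)} {Λ : Type} (S : NestedStructure d K Λ)

lemma subset_of_mem_child {α β : Λ} (hβ : β ∈ S.child α) : S.Kα β ⊆ S.Kα α :=
  S.child_union α ▸ subset_biUnion_of_mem hβ

lemma eq_root_of_root_mem_child {α : Λ} (h : S.root ∈ S.child α) : α = S.root :=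
  (S.inj <| (S.subset_of_mem_child h).antisymm (S.root_eq.symm ▸ S.subset_K α)).symm

lemma ne_root_of_mem_child {α β : Λ} (hβ : β ∈ S.child α) (hα : α ≠ S.root) :
    β ≠ S.root := by
  rintro rfl
  exact hα (S.eq_root_of_root_mem_child hβ)

end NestedStructure

namespace FRFTStructure

variable {d : ℕ} {K : Set (Pt d)} {Λ : Type} (S : FRFTStructure d K Λ)

/-- A point of `V_α` comes from some `K_β ∩ C_γ` with `β ∼ α`; the child `δ` of `β` containing
it is matched by (A2) with a child `δ'` of `α` such that `φ_{δ,δ'} = φ_{β,α}`, and `γ` is an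
`(n+1)`-fold parent of `δ`. -/
lemma Vset_subset_biUnion_child (α : Λ) :
    Vset S.Kα S.child S.φ S.root α ⊆ ⋃ β ∈ S.child α, Vset S.Kα S.child S.φ S.root β := by
  intro x hx
  obtain ⟨β, ⟨hsim, hβ⟩, y, ⟨hyβ, hyU⟩, rfl⟩ := mem_iUnion₂.mp hx
  obtain ⟨n, hn, γ, hγ, hyC⟩ : ∃ n, 1 ≤ n ∧ ∃ γ ∈ parentIter S.child n β,
      y ∈ Cset S.Kα S.child γ := by simpa only [mem_iUnion, exists_prop] using hyU
  obtain ⟨δ, hδ, hyδ⟩ := mem_iUnion₂.mp (S.child_union β ▸ hyβ)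
  obtain ⟨δ', ⟨hδ', hδsim, hφ⟩, -⟩ := S.A2 β α hsim δ hδ
  refine mem_iUnion₂.mpr ⟨δ', hδ', ?_⟩
  rw [← hφ]
  exact mem_Vset hδsim (S.ne_root_of_mem_child hδ hβ) hyδ (Nat.le_add_left 1 n)
    (parentIter_succ_subset_of_mem_child hδ n hγ) hyC

lemma Cset_inter_subset_Vset {α β : Λ} (hβ : β ∈ S.child α) (hβr : β ≠ S.root) :
    S.Kα β ∩ Cset S.Kα S.child α ⊆ Vset S.Kα S.child S.φ S.root β := by
  rintro x ⟨hxβ, hxC⟩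
  have hx := mem_Vset (φ := S.φ) (simRel_refl S.Kα β) hβr hxβ le_rfl
    (mem_biUnion (mem_singleton β) hβ) hxC
  rwa [S.φ_refl, id] at hx

lemma Cset_subset_biUnion_child (α : Λ) :
    Cset S.Kα S.child α ⊆ ⋃ β ∈ S.child α, Vset S.Kα S.child S.φ S.root β := by
  intro x hx
  obtain ⟨β, hβ, β', hβ', hne, hxβ, hxβ'⟩ : ∃ β ∈ S.child α, ∃ β' ∈ S.child α, β ≠ β' ∧
      x ∈ S.Kα β ∩ S.Kα β' := by simpa only [Cset, mem_iUnion, exists_prop] using hx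
  obtain ⟨b, hb, hxb, hbr⟩ : ∃ b ∈ S.child α, x ∈ S.Kα b ∧ b ≠ S.root := by
    by_cases hβr : β = S.root
    · exact ⟨β', hβ', hxβ', fun h => hne (hβr.trans h.symm)⟩
    · exact ⟨β, hβ, hxβ, hβr⟩
  exact mem_iUnion₂.mpr ⟨b, hb, S.Cset_inter_subset_Vset hb hbr ⟨hxb, hx⟩⟩

end FRFTStructure

theorem stmt4_general {d : ℕ} (K : Set (Pt d)) {Λ : Type} (S : FRFTStructure d K Λ) (α : Λ) :
    Vset S.Kα S.child S.φ S.root α ∪ Cset S.Kα S.child α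
      ⊆ ⋃ β ∈ S.child α, Vset S.Kα S.child S.φ S.root β :=
  union_subset (S.Vset_subset_biUnion_child α) (S.Cset_subset_biUnion_child α)

/-- **Proposition 2.3(d).** For an f.r.f.t. nested structure of a connected self-similar
set `K`, for every `α` one has `V_α ∪ C_α ⊆ ⋃_{β ∈ Λ_α} V_β`. -/
theorem stmt4 {d N : ℕ} (hN : 2 ≤ N) (F : Fin N → Pt d → Pt d) (c : Fin N → ℝ)
    (hc : ∀ i, 0 < c i ∧ c i < 1)
    (hF : ∀ i x y, dist (F i x) (F i y) = c i * dist x y)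
    (K : Set (Pt d)) (hKc : IsCompact K) (hKne : K.Nonempty)
    (hself : K = ⋃ i, F i '' K) (hconn : IsConnected K)
    {Λ : Type} (S : FRFTStructure d K Λ) (α : Λ) :
    Vset S.Kα S.child S.φ S.root α ∪ Cset S.Kα S.child α
      ⊆ ⋃ β ∈ S.child α, Vset S.Kα S.child S.φ S.root β :=
  stmt4_general K S α
end
end

section
/- Let 𝒮𝒢^g be the golden ratio Sierpinski gasket. Then 𝒮𝒢^g does not satisfy the finite chain length property: the supremum L(𝒮𝒢^g) of the lengths of overlapping chains in 𝒮𝒢^g is infinite; moreover, for every 0 < δ < 1 the supremum L_δ(𝒮𝒢^g) of the lengths of δ-overlapping chains is infinite. -/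
open Set

noncomputable section

/-- `F_w = F_{w_1} ∘ ⋯ ∘ F_{w_m}` for a word `w = w_1⋯w_m`. -/
def Fword {α : Type*} {N : ℕ} (F : Fin N → α → α) : List (Fin N) → α → α
  | [] => id
  | i :: w => F i ∘ Fword F w

/-- `c_w = c_{w_1}⋯c_{w_m}`, the similarity ratio of `F_w`. -/
def cword {N : ℕ} (c : Fin N → ℝ) (w : List (Fin N)) : ℝ := (w.map c).prod

/-- `(F_{w^{(1)}}K, …, F_{w^{(m)}}K)` (encoded by the words `w 0, …, w (m-1)`) is an
overlapping chain: the copies are distinct, none is contained in another, and each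
`F_{w^{(i+1)}}K` has infinite intersection with the union of the preceding copies. -/
def IsOverlapChain {α : Type*} {N : ℕ} (F : Fin N → α → α) (K : Set α)
    (m : ℕ) (w : ℕ → List (Fin N)) : Prop :=
  (∀ i < m, ∀ j < m, i ≠ j → Fword F (w i) '' K ≠ Fword F (w j) '' K) ∧
  (∀ i < m, ∀ j < m, i ≠ j → ¬ Fword F (w i) '' K ⊆ Fword F (w j) '' K) ∧
  (∀ i : ℕ, i + 1 < m →
    ((Fword F (w (i + 1)) '' K) ∩ ⋃ j ∈ Finset.range (i + 1), Fword F (w j) '' K).Infinite)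

/-- A `δ`-overlapping chain: an overlapping chain all of whose members have comparable
similarity ratios: `δ ≤ c_{w^{(i)}}/c_{w^{(j)}} ≤ 1/δ`. -/
def IsDeltaChain {α : Type*} {N : ℕ} (F : Fin N → α → α) (c : Fin N → ℝ) (K : Set α)
    (δ : ℝ) (m : ℕ) (w : ℕ → List (Fin N)) : Prop :=
  IsOverlapChain F K m w ∧
  ∀ i < m, ∀ j < m,
    δ ≤ cword c (w i) / cword c (w j) ∧ cword c (w i) / cword c (w j) ≤ 1 / δ

/-- The golden ratio `ρ = (√5 − 1)/2`. -/
def grho : ℝ := (Real.sqrt 5 - 1) / 2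

/-- The IFS of the golden ratio Sierpinski gasket on the triangle with vertices
`q 0, q 1, q 2`: `F_1(x) = ρ²(x−q_1)+q_1`, `F_i(x) = ρ(x−q_i)+q_i` for `i = 2,3`. -/
def gF (q : Fin 3 → Pt 2) : Fin 3 → Pt 2 → Pt 2 :=
  fun i x => (![grho ^ 2, grho, grho] i) • (x - q i) + q i

/-- The similarity ratios of the IFS of the golden ratio Sierpinski gasket. -/
def gc : Fin 3 → ℝ := ![grho ^ 2, grho, grho]

/-!
Indices are shifted by one against the paper: `gF q 1` and `gF q 2` are the homotheties of
ratio `ρ` about `q 1` and `q 2`. Since `ρ² = 1 - ρ` they satisfy `F₁F₂F₂ = F₂F₁F₁`, and from this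
relation the words of length `L` over `{1, 2}` avoiding the factor `11`, listed
lexicographically, have consecutive members `A, B` with `A2 = B1` or `A22 = B11` as maps; so
consecutive copies share an infinite subcopy. All these copies are translates of `ρ^L K` along
`q 2 - q 1`, and the translation increases strictly along the list; as a nonempty compact set
contains no nonzero translate of itself, no copy contains another. All ratios equal `ρ^L`, so
the chain is a `δ`-chain for every `δ ≤ 1`, and it has at least `L + 1` members.
-/

open Real goldenRatio

lemma grho_eq_neg_goldenConj : grho = -ψ := by
  rw [grho, goldenConj]; ring

lemma grho_pos : 0 < grho := by
  rw [grho_eq_neg_goldenConj]; linarith [goldenConj_neg]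

lemma grho_lt_one : grho < 1 := by
  rw [grho_eq_neg_goldenConj]; linarith [neg_one_lt_goldenConj]

lemma grho_sq : grho ^ 2 = 1 - grho := by
  rw [grho_eq_neg_goldenConj, neg_sq, goldenConj_sq]; ring

section Fword

variable {α : Type*} {N : ℕ} (F : Fin N → α → α)

lemma Fword_append (A B : List (Fin N)) : Fword F (A ++ B) = Fword F A ∘ Fword F B := by
  induction A with
  | nil => rfl
  | cons i A ih => rw [List.cons_append, Fword, Fword, ih, Function.comp_assoc]

lemma Fword_eq_prod (A : List (Fin N)) :
    Fword F A = (A.map F : List (Function.End α)).prod := by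
  induction A with
  | nil => rfl
  | cons i A ih => rw [Fword, ih]; rfl

variable {F} {K : Set α}

lemma image_Fword_subset (hK : ∀ i, F i '' K ⊆ K) (A : List (Fin N)) : Fword F A '' K ⊆ K := by
  induction A with
  | nil => simp [Fword]
  | cons i A ih => rw [Fword, Set.image_comp]; exact (Set.image_mono ih).trans (hK i)

lemma infinite_inter_image_Fword (hK : ∀ i, F i '' K ⊆ K) (hKinf : K.Infinite)
    {A B C D : List (Fin N)} (h : Fword F (A ++ C) = Fword F (B ++ D))
    (hinj : Function.Injective (Fword F (A ++ C))) :
    (Fword F B '' K ∩ Fword F A '' K).Infinite := by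
  refine (hKinf.image hinj.injOn).mono (subset_inter ?_ ?_)
  · rw [h, Fword_append, image_comp]; exact image_mono (image_Fword_subset hK D)
  · rw [Fword_append, image_comp]; exact image_mono (image_Fword_subset hK C)

lemma isOverlapChain_getD {l : List (List (Fin N))}
    (hsub : ∀ i j (hi : i < l.length) (hj : j < l.length),
      Fword F l[i] '' K ⊆ Fword F l[j] '' K → i = j)
    (hchain : l.IsChain fun A B => (Fword F B '' K ∩ Fword F A '' K).Infinite) :
    IsOverlapChain F K l.length (l.getD · []) := by
  refine ⟨fun i hi j hj hij h => hij (hsub i j hi hj ?_), fun i hi j hj hij h => hij ?_,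
    fun i hi => ?_⟩
  · dsimp only at h
    rw [List.getD_eq_getElem _ _ hi, List.getD_eq_getElem _ _ hj] at h
    exact h.subset
  · dsimp only at h
    rw [List.getD_eq_getElem _ _ hi, List.getD_eq_getElem _ _ hj] at h
    exact hsub i j hi hj h
  · dsimp only
    rw [List.getD_eq_getElem _ _ hi]
    refine (List.isChain_iff_getElem.mp hchain i hi).mono (inter_subset_inter_right _ ?_)
    rw [← List.getD_eq_getElem _ [] (Nat.lt_of_succ_lt hi)]
    exact subset_biUnion_of_mem (u := fun j => Fword F (l.getD j []) '' K)
      (Finset.mem_coe.mpr (Finset.self_mem_range_succ i))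

lemma IsOverlapChain.isDeltaChain {c : Fin N → ℝ} {δ r : ℝ} {m : ℕ} {w : ℕ → List (Fin N)}
    (h : IsOverlapChain F K m w) (hc : ∀ i < m, cword c (w i) = r) (hr : r ≠ 0)
    (hδ : 0 < δ) (hδ1 : δ ≤ 1) : IsDeltaChain F c K δ m w :=
  ⟨h, fun i hi j hj => by
    rw [hc i hi, hc j hj, div_self hr]
    exact ⟨hδ1, one_le_one_div hδ hδ1⟩⟩

end Fword

lemma IsCompact.eq_zero_of_add_mem {E : Type*} [NormedAddCommGroup E] [InnerProductSpace ℝ E]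
    {K : Set E} (hK : IsCompact K) (hne : K.Nonempty) {v : E} (hv : ∀ x ∈ K, x + v ∈ K) :
    v = 0 := by
  obtain ⟨x, hx, hmax⟩ :=
    hK.exists_isMaxOn hne (f := fun y => inner ℝ y v) (by fun_prop)
  have h : inner ℝ (x + v) v ≤ inner ℝ x v := hmax (hv x hx)
  rw [inner_add_left, add_le_iff_nonpos_right] at h
  exact real_inner_self_nonpos.mp h

lemma Set.infinite_of_dist_eq_mul {X : Type*} [MetricSpace X] {f : X → X} {K : Set X}
    {c x : X} {r : ℝ} (hr0 : 0 < r) (hr1 : r < 1) (hf : ∀ y, dist (f y) c = r * dist y c)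
    (hK : f '' K ⊆ K) (hx : x ∈ K) (hxc : x ≠ c) : K.Infinite := by
  have hdist : ∀ k, dist (f^[k] x) c = r ^ k * dist x c := by
    intro k
    induction k with
    | zero => simp
    | succ k ih => rw [Function.iterate_succ_apply', hf, ih, pow_succ']; ring
  refine Set.infinite_of_injective_forall_mem (f := fun k => f^[k] x) (fun a b hab => ?_)
    fun k => (Set.MapsTo.iterate (fun y hy => hK (mem_image_of_mem f hy)) k) hx
  have h := hdist a
  rw [show f^[a] x = f^[b] x from hab, hdist b] at h
  exact pow_right_injective₀ hr0 hr1.ne (mul_right_cancel₀ (dist_ne_zero.mpr hxc) h).symm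

lemma List.nodup_of_isChain_exists_pos_smul {E : Type*} [AddCommGroup E] [Module ℝ E] {e : E}
    (he : e ≠ 0) {l : List E} (h : l.IsChain fun x y => ∃ c : ℝ, 0 < c ∧ y - x = c • e) :
    l.Nodup := by
  let R : E → E → Prop := fun x y => ∃ c : ℝ, 0 < c ∧ y - x = c • e
  have : Trans R R R := ⟨fun ⟨c, hc, hxy⟩ ⟨d, hd, hyz⟩ =>
    ⟨d + c, add_pos hd hc, by rw [add_smul, ← hxy, ← hyz]; abel⟩⟩
  refine (h.pairwise (R := R)).imp ?_
  rintro x _ ⟨c, hc, hxx⟩ rfl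
  rw [sub_self, eq_comm, smul_eq_zero] at hxx
  exact hxx.elim hc.ne' he

section Words

variable {M : Type*} [Monoid M] (f : Fin 3 → M)

def Linked (A B : List (Fin 3)) : Prop :=
  ((A ++ [2]).map f).prod = ((B ++ [1]).map f).prod ∨
    ((A ++ [2, 2]).map f).prod = ((B ++ [1, 1]).map f).prod

variable {f} in
lemma Linked.cons {A B : List (Fin 3)} (h : Linked f A B) (i : Fin 3) :
    Linked f (i :: A) (i :: B) := by
  simp only [Linked, List.cons_append, List.map_cons, List.prod_cons] at h ⊢
  rcases h with h | h <;> simp only [h, true_or, or_true]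

def alternatingWord : ℕ → List (Fin 3)
  | 0 => []
  | 1 => [1]
  | n + 2 => 1 :: 2 :: alternatingWord n

lemma prod_alternatingWord_two_mul (j : ℕ) :
    ((alternatingWord (2 * j)).map f).prod = (f 1 * f 2) ^ j := by
  induction j with
  | zero => simp [alternatingWord]
  | succ j ih =>
    rw [show 2 * (j + 1) = 2 * j + 2 by ring, alternatingWord, List.map_cons, List.map_cons,
      List.prod_cons, List.prod_cons, ih, pow_succ', mul_assoc]

lemma prod_alternatingWord_two_mul_add_one (j : ℕ) :
    ((alternatingWord (2 * j + 1)).map f).prod = (f 1 * f 2) ^ j * f 1 := by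
  induction j with
  | zero => simp [alternatingWord]
  | succ j ih =>
    rw [show 2 * (j + 1) + 1 = 2 * j + 1 + 2 by ring, alternatingWord, List.map_cons,
      List.map_cons, List.prod_cons, List.prod_cons, ih, pow_succ']
    simp only [mul_assoc]

/-- The words of length `n` over `{1, 2}` without two consecutive `1`s, in lexicographic order. -/
def fibWords : ℕ → List (List (Fin 3))
  | 0 => [[]]
  | 1 => [[1], [2]]
  | n + 2 => (fibWords n).map (fun w => 1 :: 2 :: w) ++ (fibWords (n + 1)).map (2 :: ·)

lemma succ_le_length_fibWords : ∀ n, n + 1 ≤ (fibWords n).length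
  | 0 => by simp [fibWords]
  | 1 => by simp [fibWords]
  | n + 2 => by
    have := succ_le_length_fibWords n
    have := succ_le_length_fibWords (n + 1)
    simp only [fibWords, List.length_append, List.length_map]
    omega

lemma length_eq_and_zero_notMem_of_mem_fibWords :
    ∀ {n : ℕ} {w : List (Fin 3)}, w ∈ fibWords n → w.length = n ∧ 0 ∉ w
  | 0, w, hw => by simp_all [fibWords]
  | 1, w, hw => by
    simp only [fibWords, List.mem_cons, List.not_mem_nil, or_false] at hw
    rcases hw with rfl | rfl <;> simp
  | n + 2, w, hw => by
    simp only [fibWords, List.mem_append, List.mem_map] at hw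
    rcases hw with ⟨v, hv, rfl⟩ | ⟨v, hv, rfl⟩
    · obtain ⟨hl, h0⟩ := length_eq_and_zero_notMem_of_mem_fibWords hv
      simp [hl, h0]
    · obtain ⟨hl, h0⟩ := length_eq_and_zero_notMem_of_mem_fibWords hv
      simp [hl, h0]

lemma head?_fibWords : ∀ n, (fibWords n).head? = some (alternatingWord n)
  | 0 => rfl
  | 1 => rfl
  | n + 2 => by
    simp only [fibWords, List.head?_append, List.head?_map, head?_fibWords n, Option.map_some,
      Option.some_or, alternatingWord]

lemma getLast?_fibWords : ∀ n, (fibWords n).getLast? = some (List.replicate n 2)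
  | 0 => rfl
  | 1 => rfl
  | n + 2 => by
    simp [fibWords, List.getLast?_append, getLast?_fibWords (n + 1), List.replicate_succ]

variable {f} (hf : f 1 * f 2 * f 2 = f 2 * f 1 * f 1)
include hf

lemma mul_pow_two_mul_eq (j : ℕ) : f 1 * f 2 ^ (2 * j) = (f 2 * f 1) ^ j * f 1 := by
  induction j with
  | zero => simp
  | succ j ih =>
    calc f 1 * f 2 ^ (2 * (j + 1)) = f 1 * f 2 ^ (2 * j) * f 2 * f 2 := by
          rw [mul_add, mul_one, pow_add, sq]; simp only [mul_assoc]
      _ = (f 2 * f 1) ^ j * (f 1 * f 2 * f 2) := by rw [ih]; simp only [mul_assoc]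
      _ = (f 2 * f 1) ^ (j + 1) * f 1 := by rw [hf, pow_succ]; simp only [mul_assoc]

lemma mul_pow_two_mul_add_two_eq (j : ℕ) :
    f 1 * f 2 ^ (2 * j + 2) = f 2 * (f 1 * f 2) ^ j * (f 1 * f 1) := by
  calc f 1 * f 2 ^ (2 * j + 2) = f 1 * f 2 ^ (2 * j) * f 2 * f 2 := by
        rw [pow_add, sq]; simp only [mul_assoc]
    _ = (f 2 * f 1) ^ j * (f 1 * f 2 * f 2) := by
        rw [mul_pow_two_mul_eq hf]; simp only [mul_assoc]
    _ = (f 2 * f 1) ^ j * f 2 * (f 1 * f 1) := by rw [hf]; simp only [mul_assoc]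
    _ = f 2 * (f 1 * f 2) ^ j * (f 1 * f 1) := by rw [mul_pow_mul]

lemma linked_one_replicate_two (k : ℕ) :
    Linked f (1 :: List.replicate k 2) (2 :: alternatingWord k) := by
  simp only [Linked, List.cons_append, List.map_cons, List.map_append, List.prod_cons,
    List.prod_append, List.map_replicate, List.prod_replicate, List.map_nil, List.prod_nil,
    mul_one]
  obtain ⟨j, rfl | rfl⟩ := Nat.even_or_odd' k
  · right
    have h := mul_pow_two_mul_add_two_eq hf j
    rw [pow_add, sq] at h
    simpa only [prod_alternatingWord_two_mul, mul_assoc] using h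
  · left
    have h := mul_pow_two_mul_add_two_eq hf j
    rw [show 2 * j + 2 = 2 * j + 1 + 1 by ring, pow_succ] at h
    simpa only [prod_alternatingWord_two_mul_add_one, mul_assoc] using h

lemma isChain_linked_fibWords : ∀ n, (fibWords n).IsChain (Linked f)
  | 0 => List.isChain_singleton _
  | 1 => List.isChain_pair.mpr (linked_one_replicate_two hf 0)
  | n + 2 => by
    simp only [fibWords]
    refine List.isChain_append.mpr ⟨?_, ?_, ?_⟩
    · exact (List.isChain_map _).mpr
        ((isChain_linked_fibWords n).imp fun _ _ h => (h.cons 2).cons 1)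
    · exact (List.isChain_map _).mpr ((isChain_linked_fibWords (n + 1)).imp fun _ _ h => h.cons 2)
    · intro A hA B hB
      rw [List.getLast?_map, getLast?_fibWords, Option.map_some, Option.mem_some_iff] at hA
      rw [List.head?_map, head?_fibWords, Option.map_some, Option.mem_some_iff] at hB
      subst hA hB
      exact linked_one_replicate_two hf (n + 1)

end Words

lemma linked_iff_Fword_eq {α : Type*} (F : Fin 3 → α → α) {A B : List (Fin 3)} :
    Linked (M := Function.End α) F A B ↔
      Fword F (A ++ [2]) = Fword F (B ++ [1]) ∨ Fword F (A ++ [2, 2]) = Fword F (B ++ [1, 1]) := by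
  simp only [Fword_eq_prod]; rfl

section Gasket

variable (q : Fin 3 → Pt 2) {K : Set (Pt 2)}

lemma gF_of_ne_zero {i : Fin 3} (hi : i ≠ 0) (x : Pt 2) : gF q i x = grho • (x - q i) + q i := by
  fin_cases i <;> simp_all [gF]

lemma gF_sub_gF {i : Fin 3} (hi : i ≠ 0) (x y : Pt 2) : gF q i x - gF q i y = grho • (x - y) := by
  rw [gF_of_ne_zero q hi, gF_of_ne_zero q hi]; module

lemma dist_gF_self {i : Fin 3} (hi : i ≠ 0) (x : Pt 2) :
    dist (gF q i x) (q i) = grho * dist x (q i) := by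
  rw [dist_eq_norm, gF_of_ne_zero q hi, add_sub_cancel_right, norm_smul,
    Real.norm_of_nonneg grho_pos.le, dist_eq_norm]

lemma gF_relation : gF q 1 ∘ gF q 2 ∘ gF q 2 = gF q 2 ∘ gF q 1 ∘ gF q 1 := by
  funext x
  simp only [Function.comp_apply, gF_of_ne_zero q one_ne_zero,
    gF_of_ne_zero q (i := 2) (by decide)]
  match_scalars
  · ring
  · linear_combination (1 - grho) * grho_sq
  · linear_combination (grho - 1) * grho_sq

lemma Fword_sub_Fword {A : List (Fin 3)} (hA : 0 ∉ A) (x y : Pt 2) :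
    Fword (gF q) A x - Fword (gF q) A y = grho ^ A.length • (x - y) := by
  induction A with
  | nil => simp [Fword]
  | cons i A ih =>
    rw [List.mem_cons, not_or] at hA
    rw [Fword, Function.comp_apply, Function.comp_apply, gF_sub_gF q (Ne.symm hA.1), ih hA.2,
      smul_smul, List.length_cons, pow_succ']

lemma Fword_injective {A : List (Fin 3)} (hA : 0 ∉ A) : Function.Injective (Fword (gF q) A) := by
  intro x y h
  have h' := Fword_sub_Fword q hA x y
  rw [h, sub_self, eq_comm, smul_eq_zero] at h'
  exact sub_eq_zero.mp (h'.resolve_left (pow_ne_zero _ grho_pos.ne'))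

lemma cword_gc {A : List (Fin 3)} (hA : 0 ∉ A) : cword gc A = grho ^ A.length := by
  induction A with
  | nil => rfl
  | cons i A ih =>
    rw [List.mem_cons, not_or] at hA
    have hi : gc i = grho := by fin_cases i <;> simp_all [gc]
    rw [cword, List.map_cons, List.prod_cons, ← cword, ih hA.2, hi, List.length_cons, pow_succ']

lemma Fword_eq_of_image_subset (hKc : IsCompact K) (hKne : K.Nonempty)
    {A B : List (Fin 3)} (hA : 0 ∉ A) (hB : 0 ∉ B) (hlen : A.length = B.length)
    (h : Fword (gF q) A '' K ⊆ Fword (gF q) B '' K) :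
    Fword (gF q) A (q 1) = Fword (gF q) B (q 1) := by
  set v := (grho ^ A.length)⁻¹ • (Fword (gF q) A (q 1) - Fword (gF q) B (q 1))
  have hv : ∀ x ∈ K, x + v ∈ K := by
    intro x hx
    obtain ⟨y, hy, hyx⟩ := h ⟨x, hx, rfl⟩
    have hxy : y - x = v := by
      rw [eq_inv_smul_iff₀ (pow_ne_zero _ grho_pos.ne'), hlen, ← Fword_sub_Fword q hB, hyx,
        ← sub_eq_sub_iff_sub_eq_sub, Fword_sub_Fword q hA, Fword_sub_Fword q hB, hlen]
    rwa [← hxy, add_sub_cancel]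
  have hv0 := hKc.eq_zero_of_add_mem hKne hv
  rw [smul_eq_zero, sub_eq_zero] at hv0
  exact hv0.resolve_left (inv_ne_zero (pow_ne_zero _ grho_pos.ne'))

lemma Linked.exists_pos_smul {A B : List (Fin 3)} (hA : 0 ∉ A)
    (h : Linked (M := Function.End (Pt 2)) (gF q) A B) :
    ∃ c : ℝ, 0 < c ∧ Fword (gF q) B (q 1) - Fword (gF q) A (q 1) = c • (q 2 - q 1) := by
  have hshift : ∀ C D, Fword (gF q) (A ++ C) = Fword (gF q) (B ++ D) →
      Fword (gF q) D (q 1) = q 1 →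
      Fword (gF q) B (q 1) - Fword (gF q) A (q 1) =
        grho ^ A.length • (Fword (gF q) C (q 1) - q 1) := by
    intro C D hCD hD
    have h1 := congrFun hCD (q 1)
    rw [Fword_append, Fword_append, Function.comp_apply, Function.comp_apply, hD] at h1
    rw [← Fword_sub_Fword q hA, h1]
  have hfix : gF q 1 (q 1) = q 1 := by simp [gF_of_ne_zero q one_ne_zero]
  rcases (linked_iff_Fword_eq _).mp h with h | h
  · refine ⟨grho ^ A.length * (1 - grho),
      mul_pos (pow_pos grho_pos _) (sub_pos.mpr grho_lt_one), ?_⟩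
    rw [hshift _ _ h (by simp [Fword, hfix]), mul_smul]
    simp only [Fword, Function.comp_apply, id_eq, gF_of_ne_zero q (i := 2) (by decide)]
    congr 1; module
  · refine ⟨grho ^ A.length * grho, mul_pos (pow_pos grho_pos _) grho_pos, ?_⟩
    rw [hshift _ _ h (by simp [Fword, hfix]), mul_smul]
    simp only [Fword, Function.comp_apply, id_eq, gF_of_ne_zero q (i := 2) (by decide)]
    congr 1
    match_scalars
    · linear_combination grho_sq
    · linear_combination -grho_sq

lemma Linked.infinite_inter_image (hK : ∀ i, gF q i '' K ⊆ K) (hKinf : K.Infinite)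
    {A B : List (Fin 3)} (hA : 0 ∉ A) (h : Linked (M := Function.End (Pt 2)) (gF q) A B) :
    (Fword (gF q) B '' K ∩ Fword (gF q) A '' K).Infinite := by
  rcases (linked_iff_Fword_eq _).mp h with h | h
  · exact infinite_inter_image_Fword hK hKinf h (Fword_injective q (by simp [hA]))
  · exact infinite_inter_image_Fword hK hKinf h (Fword_injective q (by simp [hA]))

lemma cword_gc_getD_fibWords {L i : ℕ} (hi : i < (fibWords L).length) :
    cword gc ((fibWords L).getD i []) = grho ^ L := by
  obtain ⟨hlen, h0⟩ := length_eq_and_zero_notMem_of_mem_fibWords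
    ((List.getD_eq_getElem _ _ hi).symm ▸ List.getElem_mem hi)
  rw [cword_gc h0, hlen]

lemma infinite_of_forall_gF_image_subset (hq : q 1 ≠ q 2) (hKne : K.Nonempty)
    (hK : ∀ i, gF q i '' K ⊆ K) : K.Infinite := by
  obtain ⟨x, hx⟩ := hKne
  by_cases hx1 : x = q 1
  · exact Set.infinite_of_dist_eq_mul grho_pos grho_lt_one (dist_gF_self q (i := 2) (by decide))
      (hK 2) hx (hx1 ▸ hq)
  · exact Set.infinite_of_dist_eq_mul grho_pos grho_lt_one (dist_gF_self q one_ne_zero)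
      (hK 1) hx hx1

lemma isOverlapChain_fibWords (hq : q 1 ≠ q 2) (hKc : IsCompact K) (hKne : K.Nonempty)
    (hK : ∀ i, gF q i '' K ⊆ K) (hKinf : K.Infinite) (L : ℕ) :
    IsOverlapChain (gF q) K (fibWords L).length ((fibWords L).getD · []) := by
  have hmem := @length_eq_and_zero_notMem_of_mem_fibWords L
  have hchain := isChain_linked_fibWords (M := Function.End (Pt 2)) (f := gF q) (gF_relation q) L
  have hnodup : ((fibWords L).map fun A => Fword (gF q) A (q 1)).Nodup :=
    List.nodup_of_isChain_exists_pos_smul (sub_ne_zero.mpr hq.symm) <| (List.isChain_map _).mpr <|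
      hchain.imp_of_mem_imp fun A _ hA _ h => h.exists_pos_smul q (hmem hA).2
  refine isOverlapChain_getD (fun i j hi hj h => ?_)
    (hchain.imp_of_mem_imp fun A _ hA _ h => h.infinite_inter_image q hK hKinf (hmem hA).2)
  have hi' := hmem (List.getElem_mem hi)
  have hj' := hmem (List.getElem_mem hj)
  have := Fword_eq_of_image_subset q hKc hKne hi'.2 hj'.2 (hi'.1.trans hj'.1.symm) h
  exact (hnodup.getElem_inj_iff (i := i) (j := j) (hi := by simpa) (hj := by simpa)).mp
    (by simpa using this)

end Gasket

theorem stmt17_general (q : Fin 3 → Pt 2)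
    (heq1 : dist (q 0) (q 1) = dist (q 1) (q 2))
    (hpos : 0 < dist (q 0) (q 1))
    (K : Set (Pt 2)) (hKc : IsCompact K) (hKne : K.Nonempty)
    (hself : K = ⋃ i, gF q i '' K) :
    (∀ L : ℕ, ∃ (m : ℕ) (w : ℕ → List (Fin 3)),
        IsOverlapChain (gF q) K m w ∧ L < m) ∧
    (∀ δ : ℝ, 0 < δ → δ < 1 → ∀ L : ℕ, ∃ (m : ℕ) (w : ℕ → List (Fin 3)),
        IsDeltaChain (gF q) gc K δ m w ∧ L < m) := by
  have hq : q 1 ≠ q 2 := dist_pos.mp (heq1 ▸ hpos)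
  have hK : ∀ i, gF q i '' K ⊆ K := fun i => (subset_iUnion (fun i => gF q i '' K) i).trans hself.ge
  have hchain := isOverlapChain_fibWords q hq hKc hKne hK
    (infinite_of_forall_gF_image_subset q hq hKne hK)
  exact ⟨fun L => ⟨_, _, hchain L, succ_le_length_fibWords L⟩,
    fun δ hδ hδ1 L => ⟨_, _, (hchain L).isDeltaChain (fun _ => cword_gc_getD_fibWords)
      (pow_ne_zero _ grho_pos.ne') hδ hδ1.le, succ_le_length_fibWords L⟩⟩

/-- **Appendix, Example 1.** The golden ratio Sierpinski gasket `𝒮𝒢^g` (built on any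
nondegenerate equilateral triangle `q 0, q 1, q 2` in `ℝ²`) does not satisfy the finite
chain length property: overlapping chains of arbitrarily large length exist; moreover,
for every `0 < δ < 1` there are `δ`-overlapping chains of arbitrarily large length. -/
theorem stmt17 (q : Fin 3 → Pt 2)
    (heq1 : dist (q 0) (q 1) = dist (q 1) (q 2))
    (heq2 : dist (q 0) (q 2) = dist (q 1) (q 2))
    (hpos : 0 < dist (q 0) (q 1))
    (K : Set (Pt 2)) (hKc : IsCompact K) (hKne : K.Nonempty)
    (hself : K = ⋃ i, gF q i '' K) :
    (∀ L : ℕ, ∃ (m : ℕ) (w : ℕ → List (Fin 3)),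
        IsOverlapChain (gF q) K m w ∧ L < m) ∧
    (∀ δ : ℝ, 0 < δ → δ < 1 → ∀ L : ℕ, ∃ (m : ℕ) (w : ℕ → List (Fin 3)),
        IsDeltaChain (gF q) gc K δ m w ∧ L < m) :=
  stmt17_general q heq1 hpos K hKc hKne hself
end
end
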